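/- arXiv:1412.5125 — 3 statements merged into one kernel-verified Lean document; each statement's English description precedes it below -/
import Mathlib

section
/- Let A be a commutative ℂ-algebra (of functionals) and Δ a fixed bilinear 'propagator' pairing such that the star product is defined by F ⋆ G = Σ_{n≥0} (ħ^n/n!) ⟨F^{(n)}, ((i/2)Δ)^{⊗n} G^{(n)}⟩ in the model case where A = ℂ[x₁,…,x_N] is polynomials in finitely many variables, Δ is an antisymmetric real N×N matrix, and F^{(n)} denotes the n-th total derivative. Then ⋆ is associative on A[[ħ]]. -/
open MvPolynomial TensorProduct

noncomputable section

/-- Polynomials in `N` variables over `ℂ` (the model space of functionals). -/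
abbrev MoyalPoly (N : ℕ) := MvPolynomial (Fin N) ℂ

/-- The bidifferential operator `Σ_{i,j} K i j ∂_i ⊗ ∂_j` on `A ⊗ A`. -/
def moyalBidiff {N : ℕ} (K : Fin N → Fin N → ℂ) :
    (MoyalPoly N ⊗[ℂ] MoyalPoly N) →ₗ[ℂ] (MoyalPoly N ⊗[ℂ] MoyalPoly N) :=
  ∑ i : Fin N, ∑ j : Fin N,
    K i j • TensorProduct.map (pderiv i).toLinearMap (pderiv j).toLinearMap

/-- The coefficient of `ħ^n` in the star product of two polynomials:
`(1/n!) ⟨F^{(n)}, K^{⊗n} G^{(n)}⟩`, realized as multiplication after applying the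
bidifferential operator `n` times. -/
def moyalCoeff {N : ℕ} (K : Fin N → Fin N → ℂ) (F G : MoyalPoly N) (n : ℕ) : MoyalPoly N :=
  ((n.factorial : ℂ))⁻¹ • (LinearMap.mul' ℂ (MoyalPoly N)) ((moyalBidiff K)^[n] (F ⊗ₜ[ℂ] G))

/-- The star product with kernel `K`, extended ħ-bilinearly to formal power series in `ħ`:
`F ⋆ G = Σ_{n≥0} (ħ^n/n!) ⟨F^{(n)}, K^{⊗n} G^{(n)}⟩`. -/
def moyalStar {N : ℕ} (K : Fin N → Fin N → ℂ)
    (Φ Ψ : PowerSeries (MoyalPoly N)) : PowerSeries (MoyalPoly N) :=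
  PowerSeries.mk fun n =>
    ∑ p ∈ Finset.HasAntidiagonal.antidiagonal n, ∑ q ∈ Finset.HasAntidiagonal.antidiagonal p.2,
      moyalCoeff K (PowerSeries.coeff p.1 Φ) (PowerSeries.coeff q.1 Ψ) q.2

/-!
Write `P = ∑ K i j • d i ⊗ d j` on `A ⊗ A` and `μ` for multiplication, so that
`F ⋆ G = μ (exp (ħ P) (F ⊗ G))`. On `A ⊗ A ⊗ A` let `P₁₂, P₁₃, P₂₃` be the copies of `P` acting
on the indicated pair of factors. The Leibniz rule gives `P ∘ (μ ⊗ 1) = (μ ⊗ 1) ∘ (P₁₃ + P₂₃)`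
and `P ∘ (1 ⊗ μ) = (1 ⊗ μ) ∘ (P₁₂ + P₁₃)`, hence
`(F ⋆ G) ⋆ H = μ (μ ⊗ 1) (exp (ħ (P₁₃ + P₂₃)) exp (ħ P₁₂) (F ⊗ G ⊗ H))` and
`F ⋆ (G ⋆ H) = μ (1 ⊗ μ) (exp (ħ (P₁₂ + P₁₃)) exp (ħ P₂₃) (F ⊗ G ⊗ H))`.
Because the derivations commute, so do the `P_ab`, and both sides become
`μ₃ (exp (ħ (P₁₂ + P₁₃ + P₂₃)) (F ⊗ G ⊗ H))`. Coefficientwise in `ħ`, `exp (x + y) = exp x exp y`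
is the binomial theorem for commuting operators.
-/

open Finset.HasAntidiagonal

theorem Commute.inv_factorial_smul_add_pow {𝕜 S : Type*} [Field 𝕜] [CharZero 𝕜] [Semiring S]
    [Algebra 𝕜 S] {x y : S} (h : Commute x y) (n : ℕ) :
    (n.factorial : 𝕜)⁻¹ • (x + y) ^ n =
      ∑ ij ∈ antidiagonal n,
        ((ij.1.factorial : 𝕜)⁻¹ • x ^ ij.1) * ((ij.2.factorial : 𝕜)⁻¹ • y ^ ij.2) := by
  rw [h.add_pow', Finset.smul_sum]
  refine Finset.sum_congr rfl fun ⟨i, j⟩ hij => ?_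
  obtain rfl : i + j = n := mem_antidiagonal.mp hij
  rw [smul_mul_smul_comm, ← Nat.cast_smul_eq_nsmul 𝕜, smul_smul, Nat.cast_add_choose]
  congr 1
  rw [← mul_div_assoc, inv_mul_cancel₀ (Nat.cast_ne_zero.mpr (Nat.factorial_ne_zero _)), one_div,
    mul_inv]

theorem TensorProduct.commute_map {R M N : Type*} [CommSemiring R] [AddCommMonoid M]
    [AddCommMonoid N] [Module R M] [Module R N] {f f' : Module.End R M} {g g' : Module.End R N}
    (hf : Commute f f') (hg : Commute g g') : Commute (map f g) (map f' g') := by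
  simp only [Commute, SemiconjBy, ← TensorProduct.map_mul, hf.eq, hg.eq]

theorem Commute.sum_smul_sum {R S ι : Type*} [CommSemiring R] [Semiring S] [Algebra R S]
    (s : Finset ι) (c c' : ι → ι → R) {x y : ι → ι → S}
    (h : ∀ i j k l, Commute (x i j) (y k l)) :
    Commute (∑ i ∈ s, ∑ j ∈ s, c i j • x i j) (∑ k ∈ s, ∑ l ∈ s, c' k l • y k l) :=
  .sum_left _ _ _ fun i _ => .sum_left _ _ _ fun j _ => .sum_right _ _ _ fun k _ =>
    .sum_right _ _ _ fun l _ => ((h i j k l).smul_left _).smul_right _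

/- Both lemmas regroup a composition of `n` into five parts, `((a + (b + i)) + (c + j))` and
`(a + ((b + (c + i)) + j))` respectively, as `a + (b + (c + (i + j)))`. -/

theorem Finset.Nat.sum_antidiagonal_nested_left {M : Type*} [AddCommMonoid M]
    (f : ℕ → ℕ → ℕ → ℕ → ℕ → M) (n : ℕ) :
    ∑ p ∈ antidiagonal n, ∑ q ∈ antidiagonal p.2, ∑ r ∈ antidiagonal p.1,
        ∑ s ∈ antidiagonal r.2, f r.1 s.1 q.1 s.2 q.2 =
      ∑ u ∈ antidiagonal n, ∑ v ∈ antidiagonal u.2, ∑ w ∈ antidiagonal v.2,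
        ∑ z ∈ antidiagonal w.2, f u.1 v.1 w.1 z.1 z.2 := by
  simp only [Finset.sum_sigma']
  refine Finset.sum_nbij'
    (fun ⟨_, q, r, s⟩ =>
      ⟨(r.1, s.1 + q.1 + s.2 + q.2), (s.1, q.1 + s.2 + q.2), (q.1, s.2 + q.2), s.2, q.2⟩)
    (fun ⟨u, v, w, z⟩ => ⟨(u.1 + v.1 + z.1, w.1 + z.2), (w.1, z.2), (u.1, v.1 + z.1), v.1, z.1⟩)
    ?_ ?_ ?_ ?_ ?_ <;>
  · rintro ⟨⟨p₁, p₂⟩, ⟨q₁, q₂⟩, ⟨r₁, r₂⟩, s₁, s₂⟩ h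
    simp only [Finset.mem_sigma, HasAntidiagonal.mem_antidiagonal, Sigma.ext_iff, Prod.ext_iff,
      heq_eq_eq, and_true, true_and] at h ⊢ <;> omega

theorem Finset.Nat.sum_antidiagonal_nested_right {M : Type*} [AddCommMonoid M]
    (f : ℕ → ℕ → ℕ → ℕ → ℕ → M) (n : ℕ) :
    ∑ p ∈ antidiagonal n, ∑ q ∈ antidiagonal p.2, ∑ r ∈ antidiagonal q.1,
        ∑ s ∈ antidiagonal r.2, f p.1 r.1 s.1 s.2 q.2 =
      ∑ u ∈ antidiagonal n, ∑ v ∈ antidiagonal u.2, ∑ w ∈ antidiagonal v.2,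
        ∑ z ∈ antidiagonal w.2, f u.1 v.1 w.1 z.1 z.2 := by
  simp only [Finset.sum_sigma']
  refine Finset.sum_nbij'
    (fun ⟨p, q, r, s⟩ => ⟨p, (r.1, s.1 + s.2 + q.2), (s.1, s.2 + q.2), s.2, q.2⟩)
    (fun ⟨u, v, w, z⟩ => ⟨u, (v.1 + w.1 + z.1, z.2), (v.1, w.1 + z.1), w.1, z.1⟩)
    ?_ ?_ ?_ ?_ ?_ <;>
  · rintro ⟨⟨p₁, p₂⟩, ⟨q₁, q₂⟩, ⟨r₁, r₂⟩, s₁, s₂⟩ h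
    simp only [Finset.mem_sigma, HasAntidiagonal.mem_antidiagonal, Sigma.ext_iff, Prod.ext_iff,
      heq_eq_eq, and_true, true_and] at h ⊢ <;> omega

theorem MvPolynomial.pderiv_commute {σ R : Type*} [CommSemiring R] (i j : σ) :
    Commute (pderiv i : Derivation R (MvPolynomial σ R) (MvPolynomial σ R)).toLinearMap
      (pderiv j).toLinearMap := by
  classical
  refine LinearMap.ext fun f => ?_
  induction f using MvPolynomial.induction_on with
  | C a => simp
  | add f g hf hg => simp_all
  | mul_X f k hf =>
    simp only [Module.End.mul_apply, Derivation.coeFn_coe] at hf ⊢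
    simp only [pderiv_mul, map_add, hf, pderiv_X, Pi.single_apply]
    split_ifs <;> simp only [pderiv_one, mul_one, mul_zero, map_zero, add_zero]
    abel

open LinearMap (mul')

theorem LinearMap.mul'_comp_rTensor_mul' {R A : Type*} [CommSemiring R] [CommSemiring A]
    [Algebra R A] :
    mul' R A ∘ₗ (mul' R A).rTensor A =
      mul' R A ∘ₗ (mul' R A).lTensor A ∘ₗ (TensorProduct.assoc R A A A).toLinearMap :=
  TensorProduct.ext_threefold fun F G H => by simp [mul_assoc]

section Bidiff

variable {R A ι : Type*} [CommSemiring R] [CommSemiring A] [Algebra R A] [Fintype ι]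
  (d : ι → Derivation R A A) (K : ι → ι → R)

def bidiff : Module.End R (A ⊗[R] A) :=
  ∑ i, ∑ j, K i j • TensorProduct.map (d i).toLinearMap (d j).toLinearMap

def bidiff₁₂ : Module.End R ((A ⊗[R] A) ⊗[R] A) :=
  ∑ i, ∑ j, K i j •
    TensorProduct.map (TensorProduct.map (d i).toLinearMap (d j).toLinearMap) LinearMap.id

def bidiff₁₃ : Module.End R ((A ⊗[R] A) ⊗[R] A) :=
  ∑ i, ∑ j, K i j •
    TensorProduct.map (TensorProduct.map (d i).toLinearMap LinearMap.id) (d j).toLinearMap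

def bidiff₂₃ : Module.End R ((A ⊗[R] A) ⊗[R] A) :=
  ∑ i, ∑ j, K i j •
    TensorProduct.map (TensorProduct.map LinearMap.id (d i).toLinearMap) (d j).toLinearMap

theorem bidiff₁₂_eq_rTensor : bidiff₁₂ d K = (bidiff d K).rTensor A := by
  refine TensorProduct.ext_threefold fun F G H => ?_
  simp [bidiff₁₂, bidiff, sum_tmul, smul_tmul']

theorem lTensor_bidiff_comp_assoc :
    (bidiff d K).lTensor A ∘ₗ (TensorProduct.assoc R A A A).toLinearMap =
      (TensorProduct.assoc R A A A).toLinearMap ∘ₗ bidiff₂₃ d K := by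
  refine TensorProduct.ext_threefold fun F G H => ?_
  simp [bidiff₂₃, bidiff, tmul_sum, tmul_smul]

theorem bidiff_comp_rTensor_mul' :
    bidiff d K ∘ₗ (mul' R A).rTensor A =
      (mul' R A).rTensor A ∘ₗ (bidiff₁₃ d K + bidiff₂₃ d K) := by
  refine TensorProduct.ext_threefold fun F G H => ?_
  simp [bidiff, bidiff₁₃, bidiff₂₃, Finset.sum_add_distrib, add_tmul, smul_add, mul_comm G,
    add_comm]

theorem bidiff_comp_lTensor_mul' :
    bidiff d K ∘ₗ (mul' R A).lTensor A ∘ₗ (TensorProduct.assoc R A A A).toLinearMap =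
      (mul' R A).lTensor A ∘ₗ (TensorProduct.assoc R A A A).toLinearMap ∘ₗ
        (bidiff₁₂ d K + bidiff₁₃ d K) := by
  refine TensorProduct.ext_threefold fun F G H => ?_
  simp [bidiff, bidiff₁₂, bidiff₁₃, Finset.sum_add_distrib, tmul_add, smul_add, mul_comm H,
    add_comm]

variable {d} (hd : ∀ i j, Commute (d i).toLinearMap (d j).toLinearMap)
include hd

theorem commute_bidiff₁₂_bidiff₁₃ : Commute (bidiff₁₂ d K) (bidiff₁₃ d K) :=
  Commute.sum_smul_sum _ _ _ fun i _ k _ =>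
    commute_map (commute_map (hd i k) (Commute.one_left _)) (Commute.one_right _)

theorem commute_bidiff₁₂_bidiff₂₃ : Commute (bidiff₁₂ d K) (bidiff₂₃ d K) :=
  Commute.sum_smul_sum _ _ _ fun _ j k _ =>
    commute_map (commute_map (Commute.one_right _) (hd j k)) (Commute.one_left _)

theorem commute_bidiff₁₃_bidiff₂₃ : Commute (bidiff₁₃ d K) (bidiff₂₃ d K) :=
  Commute.sum_smul_sum _ _ _ fun _ j _ l =>
    commute_map (commute_map (Commute.one_right _) (Commute.one_left _)) (hd j l)

end Bidiff

section BidiffStar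

variable {R A ι : Type*} [Field R] [CommSemiring A] [Algebra R A] [Fintype ι]
  (d : ι → Derivation R A A) (K : ι → ι → R)

def bidiffCoeff (F G : A) (n : ℕ) : A :=
  (n.factorial : R)⁻¹ • mul' R A ((bidiff d K)^[n] (F ⊗ₜ[R] G))

def bidiffStar (Φ Ψ : PowerSeries A) : PowerSeries A :=
  PowerSeries.mk fun n =>
    ∑ p ∈ antidiagonal n, ∑ q ∈ antidiagonal p.2,
      bidiffCoeff d K (PowerSeries.coeff p.1 Φ) (PowerSeries.coeff q.1 Ψ) q.2

theorem bidiffCoeff_eq (F G : A) (n : ℕ) :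
    bidiffCoeff d K F G n = mul' R A (((n.factorial : R)⁻¹ • bidiff d K ^ n) (F ⊗ₜ[R] G)) := by
  rw [bidiffCoeff, LinearMap.smul_apply, Module.End.pow_apply, map_smul]

theorem bidiffCoeff_sum_left {κ : Type*} (s : Finset κ) (F : κ → A) (G : A) (n : ℕ) :
    bidiffCoeff d K (∑ k ∈ s, F k) G n = ∑ k ∈ s, bidiffCoeff d K (F k) G n := by
  simp only [bidiffCoeff_eq, sum_tmul, map_sum]

theorem bidiffCoeff_sum_right {κ : Type*} (s : Finset κ) (F : A) (G : κ → A) (n : ℕ) :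
    bidiffCoeff d K F (∑ k ∈ s, G k) n = ∑ k ∈ s, bidiffCoeff d K F (G k) n := by
  simp only [bidiffCoeff_eq, tmul_sum, map_sum]

theorem bidiffCoeff_bidiffCoeff_left (F G H : A) (i j : ℕ) :
    bidiffCoeff d K (bidiffCoeff d K F G i) H j =
      mul' R A ((mul' R A).rTensor A
        ((((j.factorial : R)⁻¹ • (bidiff₁₃ d K + bidiff₂₃ d K) ^ j) *
          ((i.factorial : R)⁻¹ • bidiff₁₂ d K ^ i)) ((F ⊗ₜ G) ⊗ₜ H))) := by
  have h₁₂ : (bidiff₁₂ d K ^ i) ((F ⊗ₜ G) ⊗ₜ H) = (bidiff d K ^ i) (F ⊗ₜ G) ⊗ₜ H := by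
    rw [bidiff₁₂_eq_rTensor, LinearMap.rTensor_pow, LinearMap.rTensor_tmul]
  have hpow := LinearMap.congr_fun
    (Module.End.commute_pow_left_of_commute (bidiff_comp_rTensor_mul' d K) j)
    ((bidiff₁₂ d K ^ i) ((F ⊗ₜ G) ⊗ₜ H))
  simp only [LinearMap.comp_apply, h₁₂, LinearMap.rTensor_tmul] at hpow
  simp only [bidiffCoeff_eq, LinearMap.smul_apply, map_smul, Module.End.mul_apply, ← smul_tmul',
    hpow, h₁₂]

theorem bidiffCoeff_bidiffCoeff_right (F G H : A) (i j : ℕ) :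
    bidiffCoeff d K F (bidiffCoeff d K G H i) j =
      mul' R A ((mul' R A).lTensor A (TensorProduct.assoc R A A A
        ((((j.factorial : R)⁻¹ • (bidiff₁₂ d K + bidiff₁₃ d K) ^ j) *
          ((i.factorial : R)⁻¹ • bidiff₂₃ d K ^ i)) ((F ⊗ₜ G) ⊗ₜ H)))) := by
  have h₂₃ := LinearMap.congr_fun
    (Module.End.commute_pow_left_of_commute (lTensor_bidiff_comp_assoc d K) i) ((F ⊗ₜ G) ⊗ₜ H)
  simp only [LinearMap.comp_apply, LinearEquiv.coe_coe, TensorProduct.assoc_tmul,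
    LinearMap.lTensor_pow, LinearMap.lTensor_tmul] at h₂₃
  have hpow := LinearMap.congr_fun
    (Module.End.commute_pow_left_of_commute (bidiff_comp_lTensor_mul' d K) j)
    ((bidiff₂₃ d K ^ i) ((F ⊗ₜ G) ⊗ₜ H))
  simp only [LinearMap.comp_apply, LinearEquiv.coe_coe, ← h₂₃, LinearMap.lTensor_tmul] at hpow
  simp only [bidiffCoeff_eq, LinearMap.smul_apply, map_smul, Module.End.mul_apply, tmul_smul,
    hpow]

variable [CharZero R] {d} (hd : ∀ i j, Commute (d i).toLinearMap (d j).toLinearMap)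
include hd

theorem sum_bidiffCoeff_bidiffCoeff_left (F G H : A) (n : ℕ) :
    ∑ ij ∈ antidiagonal n, bidiffCoeff d K (bidiffCoeff d K F G ij.1) H ij.2 =
      mul' R A ((mul' R A).rTensor A (((n.factorial : R)⁻¹ •
        (bidiff₁₂ d K + bidiff₁₃ d K + bidiff₂₃ d K) ^ n) ((F ⊗ₜ G) ⊗ₜ H))) := by
  have hc : Commute (bidiff₁₃ d K + bidiff₂₃ d K) (bidiff₁₂ d K) :=
    (commute_bidiff₁₂_bidiff₁₃ K hd).symm.add_left (commute_bidiff₁₂_bidiff₂₃ K hd).symm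
  rw [add_assoc, add_comm, hc.inv_factorial_smul_add_pow, ← Finset.Nat.sum_antidiagonal_swap]
  simp only [LinearMap.sum_apply, map_sum, Prod.fst_swap, Prod.snd_swap,
    bidiffCoeff_bidiffCoeff_left]

theorem sum_bidiffCoeff_bidiffCoeff_right (F G H : A) (n : ℕ) :
    ∑ ij ∈ antidiagonal n, bidiffCoeff d K F (bidiffCoeff d K G H ij.1) ij.2 =
      mul' R A ((mul' R A).lTensor A (TensorProduct.assoc R A A A (((n.factorial : R)⁻¹ •
        (bidiff₁₂ d K + bidiff₁₃ d K + bidiff₂₃ d K) ^ n) ((F ⊗ₜ G) ⊗ₜ H)))) := by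
  have hc : Commute (bidiff₁₂ d K + bidiff₁₃ d K) (bidiff₂₃ d K) :=
    (commute_bidiff₁₂_bidiff₂₃ K hd).add_left (commute_bidiff₁₃_bidiff₂₃ K hd)
  rw [hc.inv_factorial_smul_add_pow, ← Finset.Nat.sum_antidiagonal_swap]
  simp only [LinearMap.sum_apply, map_sum, Prod.fst_swap, Prod.snd_swap,
    bidiffCoeff_bidiffCoeff_right]

theorem sum_bidiffCoeff_assoc (F G H : A) (n : ℕ) :
    ∑ ij ∈ antidiagonal n, bidiffCoeff d K (bidiffCoeff d K F G ij.1) H ij.2 =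
      ∑ ij ∈ antidiagonal n, bidiffCoeff d K F (bidiffCoeff d K G H ij.1) ij.2 := by
  rw [sum_bidiffCoeff_bidiffCoeff_left K hd, sum_bidiffCoeff_bidiffCoeff_right K hd]
  exact LinearMap.congr_fun LinearMap.mul'_comp_rTensor_mul' _

theorem bidiffStar_assoc (Φ Ψ Χ : PowerSeries A) :
    bidiffStar d K (bidiffStar d K Φ Ψ) Χ = bidiffStar d K Φ (bidiffStar d K Ψ Χ) := by
  ext n
  simp only [bidiffStar, PowerSeries.coeff_mk, bidiffCoeff_sum_left, bidiffCoeff_sum_right]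
  rw [Finset.Nat.sum_antidiagonal_nested_left
      (fun a b c i j => bidiffCoeff d K (bidiffCoeff d K (PowerSeries.coeff a Φ)
        (PowerSeries.coeff b Ψ) i) (PowerSeries.coeff c Χ) j),
    Finset.Nat.sum_antidiagonal_nested_right
      (fun a b c i j => bidiffCoeff d K (PowerSeries.coeff a Φ)
        (bidiffCoeff d K (PowerSeries.coeff b Ψ) (PowerSeries.coeff c Χ) i) j)]
  exact Finset.sum_congr rfl fun u _ => Finset.sum_congr rfl fun v _ =>
    Finset.sum_congr rfl fun w _ => sum_bidiffCoeff_assoc K hd _ _ _ w.2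

end BidiffStar

theorem moyalStar_eq_bidiffStar {N : ℕ} (K : Fin N → Fin N → ℂ) :
    moyalStar K = bidiffStar (fun i => pderiv i) K :=
  rfl

theorem moyalStar_assoc_general {N : ℕ} (Δ : Fin N → Fin N → ℝ)
    (Φ Ψ Χ : PowerSeries (MoyalPoly N)) :
    moyalStar (fun i j => (Complex.I / 2) * (Δ i j : ℂ))
        (moyalStar (fun i j => (Complex.I / 2) * (Δ i j : ℂ)) Φ Ψ) Χ =
      moyalStar (fun i j => (Complex.I / 2) * (Δ i j : ℂ)) Φ
        (moyalStar (fun i j => (Complex.I / 2) * (Δ i j : ℂ)) Ψ Χ) := by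
  rw [moyalStar_eq_bidiffStar]
  exact bidiffStar_assoc _ (fun i j => pderiv_commute i j) Φ Ψ Χ

/-- Associativity of the Moyal star product built from `(i/2)Δ` with `Δ` an
antisymmetric real matrix, on polynomials in finitely many variables
(formal power series in `ħ`). -/
theorem moyalStar_assoc {N : ℕ} (Δ : Fin N → Fin N → ℝ)
    (hanti : ∀ i j, Δ i j = - Δ j i)
    (Φ Ψ Χ : PowerSeries (MoyalPoly N)) :
    moyalStar (fun i j => (Complex.I / 2) * (Δ i j : ℂ))
        (moyalStar (fun i j => (Complex.I / 2) * (Δ i j : ℂ)) Φ Ψ) Χ =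
      moyalStar (fun i j => (Complex.I / 2) * (Δ i j : ℂ)) Φ
        (moyalStar (fun i j => (Complex.I / 2) * (Δ i j : ℂ)) Ψ Χ) :=
  moyalStar_assoc_general Δ Φ Ψ Χ

end
end

section
/- Under the hypotheses of the previous item, the bilinear form σ(f,h) := ⟨f, Δh⟩ (for a given bilinear pairing ⟨·,·⟩ on D×E restricting from a symmetric pairing for which P is formally self-adjoint, i.e. ⟨f, Ph⟩ = ⟨Pf, h⟩, and for which Δ^A is the adjoint of Δ^R, i.e. ⟨f, Δ^R h⟩ = ⟨Δ^A f, h⟩) is antisymmetric: σ(f,h) = −σ(h,f), and σ(Pf', h) = 0 for all f' ∈ D. -/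
/-- The Pauli–Jordan/Peierls form `σ(f,h) = ⟨f, Δh⟩` built from the causal propagator
`Δ = Δ^R − Δ^A` and a symmetric pairing `B` for which `P` is formally self-adjoint and
`Δ^A` is the adjoint of `Δ^R`, is antisymmetric, and `σ(Pf', h) = 0` for all `f' ∈ D`. -/
theorem peierls_form_antisymm {E : Type*} [AddCommGroup E] [Module ℝ E]
    (P : E →ₗ[ℝ] E) (D : Submodule ℝ E) (hPD : ∀ x ∈ D, P x ∈ D)
    (ΔR ΔA : D →ₗ[ℝ] E)
    (hPR : ∀ f : D, P (ΔR f) = f) (hPA : ∀ f : D, P (ΔA f) = f)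
    (hRP : ∀ f : D, ΔR ⟨P f, hPD f f.2⟩ = f) (hAP : ∀ f : D, ΔA ⟨P f, hPD f f.2⟩ = f)
    (B : E →ₗ[ℝ] E →ₗ[ℝ] ℝ)
    (hBsym : ∀ x y, B x y = B y x)
    (hBP : ∀ x y, B (P x) y = B x (P y))
    (hadj : ∀ f h : D, B f (ΔR h) = B (ΔA f) h) :
    (∀ f h : D, B f (ΔR h - ΔA h) = - B h (ΔR f - ΔA f)) ∧
    (∀ f' h : D, B (P f') (ΔR h - ΔA h) = 0) := by
  constructor
  · intro f h
    have h1 : B f (ΔR h) = B h (ΔA f) := by rw [hadj f h, hBsym]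
    have h2 : B f (ΔA h) = B h (ΔR f) := by rw [hadj h f, hBsym]
    simp [map_sub, h1, h2]
  · intro f' h
    have hP0 : P (ΔR h - ΔA h) = 0 := by
      rw [map_sub, hPR, hPA, sub_self]
    rw [hBP, hP0, map_zero]
end

section
/- Let h̄ : [0,1] × ℝ^N → ℝ^N be smooth with h̄(1,x) = x and S'(h̄(0,x)) = 0 for all x, where S : ℝ^N → ℝ is smooth with gradient S'. If F : ℝ^N → ℝ is smooth and vanishes on the zero set of S', then F(x) = ∫₀¹ ⟨F'(h̄(t,x)), d/dt h̄(t,x)⟩ dt. In particular, if d/dt h̄(t,x) = G(h̄(t,x)) S'(x) for a smooth matrix-valued function G, then F(x) = ⟨V(x), S'(x)⟩ for the smooth vector field V(x) = ∫₀¹ G(h̄(t,x))^T F'(h̄(t,x)) dt; i.e., F lies in the ideal generated by the components of S'. -/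
open scoped RealInnerProductSpace

/-- Finite-dimensional model of the statement that the on-shell ideal is generated by
the equations of motion: if `h̄` is a smooth deformation retraction onto the critical
set of `S` (`h̄(1,x) = x`, `S'(h̄(0,x)) = 0`) and `F` vanishes on the zero set of the
gradient `S'`, then `F(x) = ∫₀¹ ⟨F'(h̄(t,x)), ∂ₜh̄(t,x)⟩ dt`; if moreover
`∂ₜh̄(t,x) = G(h̄(t,x)) S'(x)`, then `F(x) = ⟨V(x), S'(x)⟩` with
`V(x) = ∫₀¹ G(h̄(t,x))ᵀ F'(h̄(t,x)) dt`, i.e. `F` lies in the ideal generated by `S'`. -/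
theorem onshell_ideal_generated {N : ℕ}
    (S F : EuclideanSpace ℝ (Fin N) → ℝ)
    (hS : ContDiff ℝ (⊤ : ℕ∞) S) (hF : ContDiff ℝ (⊤ : ℕ∞) F)
    (hbar : ℝ → EuclideanSpace ℝ (Fin N) → EuclideanSpace ℝ (Fin N))
    (hhbar : ContDiff ℝ (⊤ : ℕ∞) (fun p : ℝ × EuclideanSpace ℝ (Fin N) => hbar p.1 p.2))
    (h1 : ∀ x, hbar 1 x = x)
    (h0 : ∀ x, gradient S (hbar 0 x) = 0)
    (hvan : ∀ x, gradient S x = 0 → F x = 0)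
    (G : EuclideanSpace ℝ (Fin N) →
      (EuclideanSpace ℝ (Fin N) →L[ℝ] EuclideanSpace ℝ (Fin N)))
    (hG : Continuous G)
    (hflow : ∀ t x, HasDerivAt (fun s => hbar s x) (G (hbar t x) (gradient S x)) t) :
    ∀ x, (F x = ∫ t in (0:ℝ)..1, ⟪gradient F (hbar t x), deriv (fun s => hbar s x) t⟫) ∧
      F x = ⟪∫ t in (0:ℝ)..1,
          (ContinuousLinearMap.adjoint (G (hbar t x))) (gradient F (hbar t x)),
        gradient S x⟫ := by
  intro x
  have hgradF : Continuous (gradient F) := by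
    have h : gradient F = fun y =>
        (InnerProductSpace.toDual ℝ (EuclideanSpace ℝ (Fin N))).symm (fderiv ℝ F y) := rfl
    rw [h]
    exact (InnerProductSpace.toDual ℝ _).symm.continuous.comp (hF.continuous_fderiv (by simp))
  have hγ : Continuous (fun t => hbar t x) := by
    have : (fun t => hbar t x) =
        (fun p : ℝ × EuclideanSpace ℝ (Fin N) => hbar p.1 p.2) ∘ (fun t => (t, x)) := rfl
    rw [this]
    exact hhbar.continuous.comp (continuous_id.prodMk continuous_const)
  -- derivative of the composed curve
  have hcomp : ∀ t : ℝ, HasDerivAt (fun s => F (hbar s x))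
      (⟪gradient F (hbar t x), G (hbar t x) (gradient S x)⟫) t := by
    intro t
    have hFg : HasGradientAt F (gradient F (hbar t x)) (hbar t x) :=
      (hF.differentiable (by simp) (hbar t x)).hasGradientAt
    have := hFg.hasFDerivAt.comp_hasDerivAt t (hflow t x)
    simpa [InnerProductSpace.toDual_apply_apply, Function.comp_def] using this
  have hcont : Continuous
      (fun t => (⟪gradient F (hbar t x), G (hbar t x) (gradient S x)⟫ : ℝ)) :=
    (hgradF.comp hγ).inner ((hG.comp hγ).clm_apply continuous_const)
  have hint : IntervalIntegrable
      (fun t => (⟪gradient F (hbar t x), G (hbar t x) (gradient S x)⟫ : ℝ))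
      MeasureTheory.volume 0 1 := hcont.intervalIntegrable 0 1
  have hmain : F x =
      ∫ t in (0:ℝ)..1, ⟪gradient F (hbar t x), G (hbar t x) (gradient S x)⟫ := by
    have h := intervalIntegral.integral_eq_sub_of_hasDerivAt (fun t _ => hcomp t) hint
    rw [h, h1 x, hvan (hbar 0 x) (h0 x), sub_zero]
  constructor
  · rw [hmain]
    congr 1
    ext t
    rw [(hflow t x).deriv]
  · have hadjc : Continuous (fun t =>
        (ContinuousLinearMap.adjoint (G (hbar t x))) (gradient F (hbar t x))) := by
      have hc : Continuous (fun t => ContinuousLinearMap.adjoint (G (hbar t x))) := by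
        have : (fun t => ContinuousLinearMap.adjoint (G (hbar t x))) =
            (ContinuousLinearMap.adjoint (𝕜 := ℝ)
              (E := EuclideanSpace ℝ (Fin N)) (F := EuclideanSpace ℝ (Fin N)))
            ∘ (fun t => G (hbar t x)) := rfl
        rw [this]
        exact (ContinuousLinearMap.adjoint (𝕜 := ℝ)
          (E := EuclideanSpace ℝ (Fin N))
          (F := EuclideanSpace ℝ (Fin N))).continuous.comp (hG.comp hγ)
      exact hc.clm_apply (hgradF.comp hγ)
    have hint2 : IntervalIntegrable
        (fun t => (ContinuousLinearMap.adjoint (G (hbar t x))) (gradient F (hbar t x)))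
        MeasureTheory.volume 0 1 := hadjc.intervalIntegrable 0 1
    have key : (⟪∫ t in (0:ℝ)..1,
          (ContinuousLinearMap.adjoint (G (hbar t x))) (gradient F (hbar t x)),
        gradient S x⟫ : ℝ)
        = ∫ t in (0:ℝ)..1,
          ⟪(ContinuousLinearMap.adjoint (G (hbar t x))) (gradient F (hbar t x)),
            gradient S x⟫ := by
      exact (ContinuousLinearMap.intervalIntegral_comp_comm
        ((innerSL ℝ).flip (gradient S x)) hint2).symm
    rw [key, hmain]
    congr 1
    ext t
    rw [ContinuousLinearMap.adjoint_inner_left]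
end
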